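/- Let K ⊂ ℝ² be a nondegenerate triangle with edge midpoints m₁, m₂, m₃. For each cyclic pair (i,j) with remaining index k, there exist unique real coefficients α_ij, β_ij, γ_ij such that the modified Nédélec function Φ_ij = Φ⁰_ij + α_ij Φ^B_ij + β_ij Φ^B_jk + γ_ij Φ^B_ki satisfies ∇λ_l · Φ_ij(m_l) = 0 for l = 1, 2, 3, i.e., the components of Φ_ij normal to the respective edges vanish at all three edge midpoints. -/

import Mathlib

/-!
At the midpoint `m_l` of the edge `e_l`, `λ_l` vanishes and the two other barycentric
coordinates equal `1/2`. Hence the bubble `Φ^B_ij = λ_i λ_j ∇λ_k` vanishes at `m_i` and `m_j`,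
and its normal component at `m_k` is `|∇λ_k|² / 4`, which is nonzero since `λ_k` is not constant.
The three conditions therefore decouple, each fixing one coefficient:
`β_ij = 2`, `γ_ij = -2` and `α_ij = 2 (∇λ_k · ∇λ_i - ∇λ_k · ∇λ_j) / |∇λ_k|²`.
-/

/-- Euclidean scalar product on ℝ². -/
noncomputable def dot (u v : ℝ × ℝ) : ℝ := u.1 * v.1 + u.2 * v.2

lemma dot_add_right (u v w : ℝ × ℝ) : dot u (v + w) = dot u v + dot u w := by
  simp only [dot, Prod.fst_add, Prod.snd_add]; ring

lemma dot_sub_right (u v w : ℝ × ℝ) : dot u (v - w) = dot u v - dot u w := by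
  simp only [dot, Prod.fst_sub, Prod.snd_sub]; ring

lemma dot_smul_right (u v : ℝ × ℝ) (t : ℝ) : dot u (t • v) = t * dot u v := by
  simp only [dot, Prod.smul_fst, Prod.smul_snd, smul_eq_mul]; ring

lemma dot_midpoint_right (u x y : ℝ × ℝ) :
    dot u (midpoint ℝ x y) = (dot u x + dot u y) / 2 := by
  simp only [midpoint_eq_smul_add, invOf_eq_inv, dot_smul_right, dot_add_right]; ring

lemma dot_self_eq_zero {u : ℝ × ℝ} : dot u u = 0 ↔ u = 0 := by
  simp only [dot, mul_self_add_mul_self_eq_zero, Prod.ext_iff, Prod.fst_zero, Prod.snd_zero]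

lemma Fin.eq_or_eq_add_one_or_eq_add_two (i l : Fin 3) : l = i ∨ l = i + 1 ∨ l = i + 2 := by
  revert i l; decide

lemma Fin.forall_fin_three_rotate {P : Fin 3 → Prop} (i : Fin 3) :
    (∀ l, P l) ↔ P i ∧ P (i + 1) ∧ P (i + 2) := by
  refine ⟨fun h => ⟨h _, h _, h _⟩, fun ⟨h₀, h₁, h₂⟩ l => ?_⟩
  obtain rfl | rfl | rfl := Fin.eq_or_eq_add_one_or_eq_add_two i l
  exacts [h₀, h₁, h₂]

section Barycentric

variable {p : Fin 3 → ℝ × ℝ} {lam : Fin 3 → ℝ × ℝ → ℝ} {g : Fin 3 → ℝ × ℝ} {cc : Fin 3 → ℝ}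

lemma barycentric_midpoint (hlam : ∀ i x, lam i x = dot (g i) x + cc i) (j : Fin 3)
    (x y : ℝ × ℝ) :
    lam j (midpoint ℝ x y) = (lam j x + lam j y) / 2 := by
  simp only [hlam, dot_midpoint_right]; ring

lemma barycentric_edge_midpoint (hlam : ∀ i x, lam i x = dot (g i) x + cc i)
    (hdelta : ∀ i j, lam i (p j) = if i = j then 1 else 0) (j l : Fin 3) :
    lam j (midpoint ℝ (p (l + 1)) (p (l + 2))) = if j = l then 0 else 1 / 2 := by
  rw [barycentric_midpoint hlam, hdelta, hdelta]
  obtain rfl | rfl | rfl := Fin.eq_or_eq_add_one_or_eq_add_two l j <;>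
    norm_num [add_assoc, Fin.ext_iff]

lemma barycentric_grad_ne_zero (hlam : ∀ i x, lam i x = dot (g i) x + cc i)
    (hdelta : ∀ i j, lam i (p j) = if i = j then 1 else 0) (l : Fin 3) : g l ≠ 0 := by
  intro hg
  have hconst (j : Fin 3) : lam l (p j) = cc l := by simp [hlam, hg, dot]
  have h₀ := (hconst l).symm.trans (hdelta l l)
  have h₁ := (hconst (l + 1)).symm.trans (hdelta l (l + 1))
  simp at h₀ h₁
  linarith

end Barycentric

theorem stmt_10_general
    (p : Fin 3 → ℝ × ℝ)
    (m : Fin 3 → ℝ × ℝ) (hm : ∀ i : Fin 3, m i = midpoint ℝ (p (i + 1)) (p (i + 2)))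
    (lam : Fin 3 → ℝ × ℝ → ℝ) (g : Fin 3 → ℝ × ℝ) (cc : Fin 3 → ℝ)
    (hlam : ∀ i x, lam i x = dot (g i) x + cc i)
    (hdelta : ∀ i j, lam i (p j) = if i = j then 1 else 0)
    (Phi0 PhiB : Fin 3 → ℝ × ℝ → ℝ × ℝ)
    (hPhi0 : ∀ i x, Phi0 i x = lam i x • g (i + 1) - lam (i + 1) x • g i)
    (hPhiB : ∀ i x, PhiB i x = (lam i x * lam (i + 1) x) • g (i + 2))
    (i : Fin 3) :
    ∃! abc : ℝ × ℝ × ℝ, ∀ l : Fin 3,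
      dot (g l)
        (Phi0 i (m l) + abc.1 • PhiB i (m l) + abc.2.1 • PhiB (i + 1) (m l)
          + abc.2.2 • PhiB (i + 2) (m l)) = 0 := by
  have hmid (j l : Fin 3) : lam j (m l) = if j = l then 0 else 1 / 2 := by
    rw [hm, barycentric_edge_midpoint hlam hdelta]
  have hG (l : Fin 3) : dot (g l) (g l) ≠ 0 :=
    dot_self_eq_zero.not.2 (barycentric_grad_ne_zero hlam hdelta l)
  have hcond (a b c : ℝ) :
      (∀ l, dot (g l) (Phi0 i (m l) + a • PhiB i (m l) + b • PhiB (i + 1) (m l)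
        + c • PhiB (i + 2) (m l)) = 0) ↔
      (a, b, c) = (2 * (dot (g (i + 2)) (g i) - dot (g (i + 2)) (g (i + 1)))
        / dot (g (i + 2)) (g (i + 2)), 2, -2) := by
    rw [Fin.forall_fin_three_rotate i]
    simp only [hPhi0, hPhiB, dot_add_right, dot_sub_right, dot_smul_right, Prod.mk.injEq]
    simp only [hmid, add_assoc, Fin.reduceAdd, add_zero, add_eq_left, left_eq_add, add_right_inj,
      Fin.reduceEq, if_true, if_false]
    refine ⟨fun ⟨hi, hj, hk⟩ => ⟨?_, ?_, ?_⟩, ?_⟩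
    · rw [eq_div_iff (hG _)]
      linear_combination 4 * hk
    · exact mul_right_cancel₀ (hG i) (by linear_combination 4 * hi)
    · exact mul_right_cancel₀ (hG (i + 1)) (by linear_combination 4 * hj)
    · rintro ⟨rfl, rfl, rfl⟩
      refine ⟨by ring, by ring, ?_⟩
      have := hG (i + 2)
      field_simp
      ring
  exact ⟨_, (hcond _ _ _).2 rfl, fun ⟨a, b, c⟩ h => (hcond a b c).1 h⟩

/-- For each cyclic pair `(i,j) = (i,i+1)` (with `k = i+2`), there exist
unique coefficients `α_ij, β_ij, γ_ij ∈ ℝ` such that the modified Nédélec function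
`Φ_ij = Φ⁰_ij + α_ij Φ^B_ij + β_ij Φ^B_jk + γ_ij Φ^B_ki` satisfies
`∇λ_l ⬝ Φ_ij(m_l) = 0` for `l = 1,2,3`. -/
theorem stmt_10
    (p : Fin 3 → ℝ × ℝ) (hp : AffineIndependent ℝ p)
    (K : Set (ℝ × ℝ)) (hK : K = convexHull ℝ (Set.range p))
    (m : Fin 3 → ℝ × ℝ) (hm : ∀ i : Fin 3, m i = midpoint ℝ (p (i + 1)) (p (i + 2)))
    (lam : Fin 3 → ℝ × ℝ → ℝ) (g : Fin 3 → ℝ × ℝ) (cc : Fin 3 → ℝ)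
    (hlam : ∀ i x, lam i x = dot (g i) x + cc i)
    (hdelta : ∀ i j, lam i (p j) = if i = j then 1 else 0)
    (Phi0 PhiB : Fin 3 → ℝ × ℝ → ℝ × ℝ)
    (hPhi0 : ∀ i x, Phi0 i x = lam i x • g (i + 1) - lam (i + 1) x • g i)
    (hPhiB : ∀ i x, PhiB i x = (lam i x * lam (i + 1) x) • g (i + 2))
    (i : Fin 3) :
    ∃! abc : ℝ × ℝ × ℝ, ∀ l : Fin 3,
      dot (g l)
        (Phi0 i (m l) + abc.1 • PhiB i (m l) + abc.2.1 • PhiB (i + 1) (m l)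
          + abc.2.2 • PhiB (i + 2) (m l)) = 0 :=
  stmt_10_general p m hm lam g cc hlam hdelta Phi0 PhiB hPhi0 hPhiB i
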